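/- arXiv:2310.19726 — 2 statements merged into one kernel-verified Lean document; each statement's English description precedes it below -/
import Mathlib

section
/- Fix d ≥ 1 and integers m, m̄ with 0 < m̄ ≤ m and m < 2^(2^d). Define α(d) = ∏_{k=1}^{d} (1 - m̄/(m-k+1))^(2^(k-1)) (assuming m ≥ d+1 so all factors are defined and in [0,1)). Then 2^(2^d) · (1-α(d))/(1-α(d+1)) > 1; equivalently (1-α(d))/2^(2^d) > (1-α(d+1))/2^(2^(d+1)). -/
/-!
The first factor of `α(j)` is `1 - m̄/m` and every other factor lies in `[0, 1]`, so
`1 - α(j) ≥ m̄/m ≥ 1/m > 2^(-2^d)` for `1 ≤ j ≤ d + 1`. Hence `2^(2^d) (1 - α(d)) > 1 ≥ 1 - α(d+1) > 0`,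
and both inequalities follow since `2^(2^(d+1)) = (2^(2^d))^2`.
-/

open Finset

theorem prod_le_of_mem_of_le_one {ι : Type*} {s : Finset ι} {f : ι → ℝ}
    (h0 : ∀ i ∈ s, 0 ≤ f i) (h1 : ∀ i ∈ s, f i ≤ 1) {a : ι} (ha : a ∈ s) :
    ∏ i ∈ s, f i ≤ f a := by
  classical
  rw [← mul_prod_erase s f ha]
  exact mul_le_of_le_one_right (h0 a ha)
    (prod_le_one (fun i hi ↦ h0 i (mem_of_mem_erase hi)) fun i hi ↦ h1 i (mem_of_mem_erase hi))

theorem one_sub_div_nonneg {a b : ℝ} (hab : a ≤ b) (hb : 0 ≤ b) : 0 ≤ 1 - a / b :=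
  sub_nonneg.mpr (div_le_one_of_le₀ hab hb)

theorem one_sub_div_le_one {a b : ℝ} (ha : 0 ≤ a) (hb : 0 ≤ b) : 1 - a / b ≤ 1 :=
  sub_le_self _ (div_nonneg ha hb)

section RashomonProduct

variable (m mbar : ℕ)

noncomputable def rashomonFactor (k : ℕ) : ℝ :=
  (1 - (mbar : ℝ) / ((m : ℝ) - (k : ℝ) + 1)) ^ (2 ^ (k - 1))

variable {m mbar}

theorem rashomonFactor_nonneg {k : ℕ} (hk : mbar + k ≤ m + 1) : 0 ≤ rashomonFactor m mbar k := by
  have hk' : (mbar : ℝ) + k ≤ m + 1 := by exact_mod_cast hk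
  exact pow_nonneg (one_sub_div_nonneg (by linarith) (by linarith [mbar.cast_nonneg (α := ℝ)])) _

theorem rashomonFactor_le_one {k : ℕ} (hk : mbar + k ≤ m + 1) : rashomonFactor m mbar k ≤ 1 := by
  have hk' : (mbar : ℝ) + k ≤ m + 1 := by exact_mod_cast hk
  have hden : (0 : ℝ) ≤ m - k + 1 := by linarith [mbar.cast_nonneg (α := ℝ)]
  exact pow_le_one₀ (one_sub_div_nonneg (by linarith) hden) (one_sub_div_le_one mbar.cast_nonneg hden)

theorem rashomonFactor_one : rashomonFactor m mbar 1 = 1 - mbar / m := by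
  simp [rashomonFactor]

theorem prod_rashomonFactor_nonneg {j : ℕ} (hj : mbar + j ≤ m + 1) :
    0 ≤ ∏ k ∈ Icc 1 j, rashomonFactor m mbar k :=
  prod_nonneg fun k hk ↦ rashomonFactor_nonneg (by have := (mem_Icc.mp hk).2; omega)

theorem prod_rashomonFactor_le {j : ℕ} (hj : 1 ≤ j) (hjm : mbar + j ≤ m + 1) :
    ∏ k ∈ Icc 1 j, rashomonFactor m mbar k ≤ 1 - mbar / m := by
  have hmem : ∀ k ∈ Icc 1 j, mbar + k ≤ m + 1 := fun k hk ↦ by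
    have := (mem_Icc.mp hk).2; omega
  rw [← rashomonFactor_one]
  exact prod_le_of_mem_of_le_one (fun k hk ↦ rashomonFactor_nonneg (hmem k hk))
    (fun k hk ↦ rashomonFactor_le_one (hmem k hk)) (mem_Icc.mpr ⟨le_rfl, hj⟩)

theorem inv_lt_one_sub_prod_rashomonFactor {j : ℕ} {N : ℝ} (hmbar : 0 < mbar) (hj : 1 ≤ j)
    (hjm : mbar + j ≤ m + 1) (hmN : (m : ℝ) < N) :
    N⁻¹ < 1 - ∏ k ∈ Icc 1 j, rashomonFactor m mbar k := by
  have hm : (0 : ℝ) < m := by exact_mod_cast (show 0 < m by omega)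
  calc N⁻¹ < (m : ℝ)⁻¹ := inv_strictAnti₀ hm hmN
    _ ≤ mbar / m := by
      rw [inv_eq_one_div]
      gcongr
      exact_mod_cast hmbar
    _ ≤ _ := by linarith [prod_rashomonFactor_le hj hjm]

end RashomonProduct

theorem rashomon_ratio_trees_general (d m mbar : ℕ) (hd : 1 ≤ d)
    (hmbar : 0 < mbar) (hmbarle : mbar ≤ m - d)
    (hm2 : m < 2 ^ (2 ^ d))
    (α : ℕ → ℝ)
    (hα : ∀ j, α j = ∏ k ∈ Finset.Icc 1 j,
      (1 - (mbar : ℝ) / ((m : ℝ) - (k : ℝ) + 1)) ^ (2 ^ (k - 1))) :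
    1 < (2 : ℝ) ^ (2 ^ d) * (1 - α d) / (1 - α (d + 1)) ∧
    (1 - α (d + 1)) / (2 : ℝ) ^ (2 ^ (d + 1)) < (1 - α d) / (2 : ℝ) ^ (2 ^ d) := by
  have hα' : ∀ j, α j = ∏ k ∈ Icc 1 j, rashomonFactor m mbar k := hα
  have hmN : (m : ℝ) < 2 ^ (2 ^ d) := by exact_mod_cast hm2
  set N : ℝ := 2 ^ (2 ^ d)
  have hN0 : 0 < N := by positivity
  have hNd : 1 < N * (1 - α d) := by
    rw [hα', ← inv_mul_lt_iff₀ hN0, mul_one]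
    exact inv_lt_one_sub_prod_rashomonFactor hmbar hd (by omega) hmN
  have hd1_pos : 0 < 1 - α (d + 1) := by
    rw [hα']
    exact (inv_pos.mpr hN0).trans
      (inv_lt_one_sub_prod_rashomonFactor hmbar (by omega) (by omega) hmN)
  have hd1_le : 1 - α (d + 1) ≤ 1 := by
    rw [hα']
    linarith [prod_rashomonFactor_nonneg (m := m) (mbar := mbar) (j := d + 1) (by omega)]
  have hN2 : (2 : ℝ) ^ (2 ^ (d + 1)) = N * N := by rw [pow_succ, pow_mul, sq]
  refine ⟨(one_lt_div hd1_pos).mpr (by linarith), ?_⟩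
  rw [hN2, div_lt_div_iff₀ (by positivity) hN0]
  nlinarith

/-- With `α(j) = ∏_{k=1}^{j} (1 - m̄/(m-k+1))^(2^(k-1))` (all factors in [0,1)),
and `m < 2^(2^d)`, the Rashomon ratio `(1-α(d))/2^(2^d)` for depth-`d` trees is
strictly larger than the ratio `(1-α(d+1))/2^(2^(d+1))` for depth-`d+1` trees;
equivalently `2^(2^d)·(1-α(d))/(1-α(d+1)) > 1`. -/
theorem rashomon_ratio_trees (d m mbar : ℕ) (hd : 1 ≤ d)
    (hmbar : 0 < mbar) (hmd : d + 1 ≤ m) (hmbarle : mbar ≤ m - d)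
    (hm2 : m < 2 ^ (2 ^ d))
    (α : ℕ → ℝ)
    (hα : ∀ j, α j = ∏ k ∈ Finset.Icc 1 j,
      (1 - (mbar : ℝ) / ((m : ℝ) - (k : ℝ) + 1)) ^ (2 ^ (k - 1))) :
    1 < (2 : ℝ) ^ (2 ^ d) * (1 - α d) / (1 - α (d + 1)) ∧
    (1 - α (d + 1)) / (2 : ℝ) ^ (2 ^ (d + 1)) < (1 - α d) / (2 : ℝ) ^ (2 ^ d) :=
  rashomon_ratio_trees_general d m mbar hd hmbar hmbarle hm2 α hα
end

section
/- For ridge regression with regularization C+λ on a non-zero data matrix X with singular values σ_i, the Rashomon ratio equals (θ/L_max)^(m/2) · ∏_{i=1}^m sqrt((C+λ)/(σ_i² + C + λ)), and this quantity is strictly increasing in λ > 0. In particular, for 0 < λ₁ < λ₂, the Rashomon ratio at noise level λ₁ is strictly smaller than at λ₂. -/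
/-!
Dividing the ellipsoid volume by the ball volume cancels `π^(m/2)/Γ(m/2+1)`, and the factor
`(C+λ)^(m/2)` coming from the ball's radius distributes over the product, so the ratio is
`(θ/L_max)^(m/2) ∏ᵢ √((C+λ)/(σᵢ² + C + λ))`. Each factor is `√(t/(σᵢ² + t))` with `t = C + λ`,
nondecreasing in `t`, and strictly increasing as soon as `σᵢ ≠ 0`.
-/

open Finset Set

theorem Real.prod_sqrt_div {ι : Type*} [Fintype ι] {c : ℝ} (hc : 0 ≤ c) (b : ι → ℝ) :
    ∏ i, √(c / b i) = c ^ ((Fintype.card ι : ℝ) / 2) * ∏ i, 1 / √(b i) := by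
  simp_rw [Real.sqrt_div hc, div_eq_mul_one_div √c, prod_mul_distrib, prod_const, card_univ,
    Real.rpow_div_two_eq_sqrt _ hc, Real.rpow_natCast]

theorem strictMonoOn_prod {ι α : Type*} [Fintype ι] [Preorder α] {s : Set α} {f : ι → α → ℝ}
    (hpos : ∀ i, ∀ x ∈ s, 0 < f i x) (hmono : ∀ i, MonotoneOn (f i) s)
    (hstrict : ∃ i, StrictMonoOn (f i) s) : StrictMonoOn (fun x ↦ ∏ i, f i x) s := by
  intro x hx y hy hxy
  obtain ⟨j, hj⟩ := hstrict
  exact prod_lt_prod (fun i _ ↦ hpos i x hx) (fun i _ ↦ hmono i hx hy hxy.le)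
    ⟨j, mem_univ j, hj hx hy hxy⟩

section RidgeFactor

variable {a c : ℝ}

theorem sqrt_add_div_add_add_pos (ha : 0 ≤ a) {x : ℝ} (hx : x ∈ Ioi (-c)) :
    0 < √((c + x) / (a + c + x)) := by
  have hcx : 0 < c + x := by linarith [Set.mem_Ioi.1 hx]
  exact Real.sqrt_pos.2 (div_pos hcx (by linarith))

theorem monotoneOn_sqrt_add_div_add_add (ha : 0 ≤ a) :
    MonotoneOn (fun x ↦ √((c + x) / (a + c + x))) (Ioi (-c)) := by
  intro x hx y hy hxy
  simp only [Set.mem_Ioi] at hx hy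
  refine Real.sqrt_le_sqrt ?_
  rw [div_le_div_iff₀ (by linarith) (by linarith)]
  nlinarith [mul_nonneg ha (sub_nonneg.2 hxy)]

theorem strictMonoOn_sqrt_add_div_add_add (ha : 0 < a) :
    StrictMonoOn (fun x ↦ √((c + x) / (a + c + x))) (Ioi (-c)) := by
  intro x hx y hy hxy
  simp only [Set.mem_Ioi] at hx hy
  refine Real.sqrt_lt_sqrt (div_pos (by linarith) (by linarith)).le ?_
  rw [div_lt_div_iff₀ (by linarith) (by linarith)]
  nlinarith [mul_pos ha (sub_pos.2 hxy)]

end RidgeFactor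

theorem ellipsoid_ball_volume_ratio {k p θ L c G : ℝ} (hp : 0 < p) (hθ : 0 ≤ θ) (hL : 0 < L)
    (hc : 0 < c) (hG : G ≠ 0) (P : ℝ) :
    (p * θ) ^ k / G * P / (p ^ k / G * (L / c) ^ k) = (θ / L) ^ k * (c ^ k * P) := by
  rw [Real.mul_rpow hp.le hθ, Real.div_rpow hL.le hc.le, Real.div_rpow hθ hL.le]
  have hpk : p ^ k ≠ 0 := (Real.rpow_pos_of_pos hp k).ne'
  have hLk : L ^ k ≠ 0 := (Real.rpow_pos_of_pos hL k).ne'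
  have hck : c ^ k ≠ 0 := (Real.rpow_pos_of_pos hc k).ne'
  field_simp

theorem ridge_rashomon_ratio_increases_general (m : ℕ)
    (σ : Fin m → ℝ) (hσ : ∃ i, σ i ≠ 0)
    (C θ Lmax : ℝ) (hC : 0 < C) (hθ : 0 < θ) (hLmax : 0 < Lmax)
    (Vrash Vball ratio : ℝ → ℝ)
    (hVrash : ∀ lam, Vrash lam =
      (Real.pi * θ) ^ ((m : ℝ) / 2) / Real.Gamma ((m : ℝ) / 2 + 1) *
        ∏ i, 1 / Real.sqrt (σ i ^ 2 + C + lam))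
    (hVball : ∀ lam, Vball lam =
      Real.pi ^ ((m : ℝ) / 2) / Real.Gamma ((m : ℝ) / 2 + 1) *
        (Lmax / (C + lam)) ^ ((m : ℝ) / 2))
    (hratio : ∀ lam, ratio lam = Vrash lam / Vball lam) :
    (∀ lam : ℝ, 0 < lam →
      ratio lam = (θ / Lmax) ^ ((m : ℝ) / 2) *
        ∏ i, Real.sqrt ((C + lam) / (σ i ^ 2 + C + lam))) ∧
    StrictMonoOn ratio (Set.Ioi (0 : ℝ)) ∧
    ∀ lam₁ lam₂ : ℝ, 0 < lam₁ → lam₁ < lam₂ → ratio lam₁ < ratio lam₂ := by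
  have closed_form : ∀ lam : ℝ, 0 < lam → ratio lam = (θ / Lmax) ^ ((m : ℝ) / 2) *
      ∏ i, √((C + lam) / (σ i ^ 2 + C + lam)) := fun lam hlam ↦ by
    rw [hratio, hVrash, hVball, Real.prod_sqrt_div (by linarith), Fintype.card_fin,
      ellipsoid_ball_volume_ratio Real.pi_pos hθ.le hLmax (by linarith)
        (Real.Gamma_pos_of_pos (by positivity)).ne']
  have hIoi : Ioi (0 : ℝ) ⊆ Ioi (-C) := Ioi_subset_Ioi (by linarith)
  have prod_strictMono : StrictMonoOn (fun lam ↦ ∏ i, √((C + lam) / (σ i ^ 2 + C + lam)))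
      (Ioi 0) := by
    refine strictMonoOn_prod (fun _ _ hx ↦ sqrt_add_div_add_add_pos (sq_nonneg _) (hIoi hx))
      (fun _ ↦ (monotoneOn_sqrt_add_div_add_add (sq_nonneg _)).mono hIoi) ?_
    obtain ⟨i, hi⟩ := hσ
    exact ⟨i, (strictMonoOn_sqrt_add_div_add_add (by positivity)).mono hIoi⟩
  have mono : StrictMonoOn ratio (Ioi 0) :=
    ((strictMono_mul_left_of_pos (Real.rpow_pos_of_pos (div_pos hθ hLmax) _)).comp_strictMonoOn
      prod_strictMono).congr fun lam hlam ↦ (closed_form lam hlam).symm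
  exact ⟨closed_form, mono, fun _ _ h₁ h₁₂ ↦ mono h₁ (h₁.trans h₁₂) h₁₂⟩

/-- For ridge regression with regularization `C + λ` on a nonzero data matrix with
singular values `σ i`, the Rashomon ratio (Rashomon-ellipsoid volume over
hypothesis-ball volume) equals
`(θ/L_max)^(m/2) · ∏ i, √((C+λ)/(σ i² + C + λ))`, is strictly increasing in `λ > 0`,
and in particular is strictly smaller at `λ₁` than at `λ₂` whenever `0 < λ₁ < λ₂`. -/
theorem ridge_rashomon_ratio_increases (m : ℕ) (hm : 0 < m)
    (σ : Fin m → ℝ) (hσ : ∃ i, σ i ≠ 0)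
    (C θ Lmax : ℝ) (hC : 0 < C) (hθ : 0 < θ) (hLmax : 0 < Lmax)
    (Vrash Vball ratio : ℝ → ℝ)
    (hVrash : ∀ lam, Vrash lam =
      (Real.pi * θ) ^ ((m : ℝ) / 2) / Real.Gamma ((m : ℝ) / 2 + 1) *
        ∏ i, 1 / Real.sqrt (σ i ^ 2 + C + lam))
    (hVball : ∀ lam, Vball lam =
      Real.pi ^ ((m : ℝ) / 2) / Real.Gamma ((m : ℝ) / 2 + 1) *
        (Lmax / (C + lam)) ^ ((m : ℝ) / 2))
    (hratio : ∀ lam, ratio lam = Vrash lam / Vball lam) :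
    (∀ lam : ℝ, 0 < lam →
      ratio lam = (θ / Lmax) ^ ((m : ℝ) / 2) *
        ∏ i, Real.sqrt ((C + lam) / (σ i ^ 2 + C + lam))) ∧
    StrictMonoOn ratio (Set.Ioi (0 : ℝ)) ∧
    ∀ lam₁ lam₂ : ℝ, 0 < lam₁ → lam₁ < lam₂ → ratio lam₁ < ratio lam₂ :=
  ridge_rashomon_ratio_increases_general m σ hσ C θ Lmax hC hθ hLmax Vrash Vball ratio hVrash hVball
    hratio
end
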